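/- For any b ∈ ℂ^{2N+1}, the Hamiltonian satisfies the upper bound H(b) ≤ (3/4) M(b)^2, with equality attained at the 2-mode configuration b_0 = √(m)/√2, b_1 = −√(m)/√2 rescaled appropriately, i.e., the bound is sharp. -/

import Mathlib

/-!
With `a_j = |b_j|²` the phases can only lower `H`, since `-Re(conj(b_j)² b_{j-1}²) ≤ a_j a_{j-1}`;
so it suffices that `½ Σ a_j² + 2 Σ a_j a_{j+1} ≤ ¾ (Σ a_j)²` for `a ≥ 0`. This follows from
`3 S² - 2 Σ a_j² - 8 Σ a_j a_{j+1} ≥ D²`, where `S` is the sum and `D` the alternating sum, proved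
by induction on the length: prepending an entry `x` to a tail `a'` with sums `S'`, `D'` raises the
left side minus `D²` by `x (6 S' + 2 D' - 8 a'_0) ≥ 0`, because `S' ≥ a'_0` and
`S' + D'`, twice the sum of the even-indexed entries of `a'`, is at least `2 a'_0`.

Equality holds for `b_0 = (1 + i)/2`, `b_1 = (1 - i)/2`: then `conj(b_1)² b_0² = b_0⁴ = -1/4`.
-/

/-- The toy-model Hamiltonian. -/
noncomputable def toyH (N : ℕ) (b : ℤ → ℂ) : ℝ :=
  ∑ j ∈ Finset.Icc (-(N : ℤ)) (N : ℤ),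
    ((1 / 2) * ‖b j‖ ^ 4
      - 2 * ((((starRingEnd ℂ) (b j)) ^ 2 * (b (j - 1)) ^ 2).re))

/-- The mass `M(b) = Σ_{j=-N}^N |b_j|²`. -/
noncomputable def toyM (N : ℕ) (b : ℤ → ℂ) : ℝ :=
  ∑ j ∈ Finset.Icc (-(N : ℤ)) (N : ℤ), ‖b j‖ ^ 2

open Finset Complex

lemma two_mul_le_sum_add_sum_neg_one_pow_mul (n : ℕ) {a : ℕ → ℝ} (ha : ∀ i, 0 ≤ a i) :
    2 * a 0 ≤ ∑ i ∈ range (n + 1), a i + ∑ i ∈ range (n + 1), (-1) ^ i * a i := by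
  rw [← sum_add_distrib, sum_range_succ', pow_zero, one_mul]
  have hrest : 0 ≤ ∑ i ∈ range n, (a (i + 1) + (-1) ^ (i + 1) * a (i + 1)) := by
    refine sum_nonneg fun i _ => ?_
    have : -1 ≤ ((-1 : ℝ) ^ (i + 1)) := by
      rcases neg_one_pow_eq_or ℝ (i + 1) with h | h <;> norm_num [h]
    nlinarith [ha (i + 1)]
  linarith

lemma sq_alternating_sum_add_le (n : ℕ) {a : ℕ → ℝ} (ha : ∀ i, 0 ≤ a i) :
    (∑ i ∈ range (n + 1), (-1) ^ i * a i) ^ 2 + 2 * ∑ i ∈ range (n + 1), a i ^ 2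
      + 8 * ∑ i ∈ range n, a i * a (i + 1) ≤ 3 * (∑ i ∈ range (n + 1), a i) ^ 2 := by
  induction n generalizing a with
  | zero =>
    simp only [zero_add, sum_range_one, range_zero, sum_empty, pow_zero, one_mul, mul_zero,
      add_zero]
    linarith
  | succ n ih =>
    have ih_tail := ih (a := fun i => a (i + 1)) (fun i => ha _)
    have hhead_le_sum :=
      single_le_sum (f := fun i => a (i + 1)) (fun i _ => ha _) (mem_range.2 n.succ_pos)
    have hhead_le_even :=
      two_mul_le_sum_add_sum_neg_one_pow_mul n (a := fun i => a (i + 1)) (fun i => ha _)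
    have hsign : ∑ i ∈ range (n + 2), (-1) ^ i * a i
        = a 0 - ∑ i ∈ range (n + 1), (-1) ^ i * a (i + 1) := by
      simp [sum_range_succ' _ (n + 1), pow_succ, sub_eq_neg_add]
    have hsq : ∑ i ∈ range (n + 2), a i ^ 2 = a 0 ^ 2 + ∑ i ∈ range (n + 1), a (i + 1) ^ 2 := by
      rw [sum_range_succ', add_comm]
    have hadj : ∑ i ∈ range (n + 1), a i * a (i + 1)
        = a 0 * a 1 + ∑ i ∈ range n, a (i + 1) * a (i + 1 + 1) := by
      rw [sum_range_succ', add_comm]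
    have hsum : ∑ i ∈ range (n + 2), a i = a 0 + ∑ i ∈ range (n + 1), a (i + 1) := by
      rw [sum_range_succ', add_comm]
    rw [hsign, hsq, hadj, hsum]
    linear_combination ih_tail + 4 * mul_nonneg (ha 0) (sub_nonneg.2 hhead_le_sum)
      + 2 * mul_nonneg (ha 0) (sub_nonneg.2 hhead_le_even)

lemma half_sum_sq_add_two_sum_mul_succ_le (n : ℕ) {a : ℕ → ℝ} (ha : ∀ i, 0 ≤ a i) :
    1 / 2 * ∑ i ∈ range (n + 1), a i ^ 2 + 2 * ∑ i ∈ range n, a i * a (i + 1)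
      ≤ 3 / 4 * (∑ i ∈ range (n + 1), a i) ^ 2 := by
  linarith [sq_alternating_sum_add_le n ha, sq_nonneg (∑ i ∈ range (n + 1), (-1) ^ i * a i)]

lemma sum_Icc_neg_eq_sum_range {M : Type*} [AddCommMonoid M] (N : ℕ) (f : ℤ → M) :
    ∑ j ∈ Icc (-(N : ℤ)) N, f j = ∑ i ∈ range (2 * N + 1), f (N - i) := by
  refine sum_nbij' (fun j => (N - j).toNat) (fun i => N - i) ?_ ?_ ?_ ?_ ?_ <;>
    intro x hx <;> simp only [mem_Icc, mem_range] at hx ⊢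
  all_goals first | omega | (congr 1; omega)

lemma sum_Icc_neg_eq_add_of_eq_zero {M : Type*} [AddCommMonoid M] {N : ℕ} (hN : 1 ≤ N)
    {f : ℤ → M} (hf : ∀ j, j ≠ 0 → j ≠ 1 → f j = 0) :
    ∑ j ∈ Icc (-(N : ℤ)) N, f j = f 0 + f 1 :=
  sum_eq_add_of_mem 0 1 (by simp) (by simp; omega) zero_ne_one fun j _ h => hf j h.1 h.2

lemma neg_re_conj_sq_mul_sq_le (z w : ℂ) :
    -((starRingEnd ℂ) z ^ 2 * w ^ 2).re ≤ ‖z‖ ^ 2 * ‖w‖ ^ 2 :=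
  calc -((starRingEnd ℂ) z ^ 2 * w ^ 2).re ≤ ‖(starRingEnd ℂ) z ^ 2 * w ^ 2‖ :=
        (neg_le_abs _).trans (abs_re_le_norm _)
    _ = ‖z‖ ^ 2 * ‖w‖ ^ 2 := by rw [norm_mul, norm_pow, norm_pow, norm_conj]

lemma toyH_le_sum_sq_norm (N : ℕ) (b : ℤ → ℂ) :
    toyH N b ≤ ∑ j ∈ Icc (-(N : ℤ)) N,
      (1 / 2 * (‖b j‖ ^ 2) ^ 2 + 2 * (‖b j‖ ^ 2 * ‖b (j - 1)‖ ^ 2)) := by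
  refine sum_le_sum fun j _ => ?_
  have := neg_re_conj_sq_mul_sq_le (b j) (b (j - 1))
  rw [← pow_mul]
  linarith

lemma toyH_le {N : ℕ} {b : ℤ → ℂ} (hb : b (-N - 1) = 0) :
    toyH N b ≤ 3 / 4 * toyM N b ^ 2 := by
  set a : ℕ → ℝ := fun i => ‖b (N - i)‖ ^ 2 with ha
  have hlast : a (2 * N + 1) = 0 := by
    simp only [ha, Nat.cast_add, Nat.cast_mul, Nat.cast_ofNat, Nat.cast_one]
    rw [show (N : ℤ) - (2 * N + 1) = -N - 1 by ring, hb, norm_zero, sq, mul_zero]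
  calc toyH N b
      ≤ ∑ j ∈ Icc (-(N : ℤ)) N, (1 / 2 * (‖b j‖ ^ 2) ^ 2 + 2 * (‖b j‖ ^ 2 * ‖b (j - 1)‖ ^ 2)) :=
        toyH_le_sum_sq_norm N b
    _ = ∑ i ∈ range (2 * N + 1), (1 / 2 * a i ^ 2 + 2 * (a i * a (i + 1))) := by
        rw [sum_Icc_neg_eq_sum_range]
        refine sum_congr rfl fun i _ => ?_
        rw [show (N : ℤ) - i - 1 = N - (i + 1 : ℕ) by push_cast; ring]
    _ = 1 / 2 * ∑ i ∈ range (2 * N + 1), a i ^ 2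
          + 2 * ∑ i ∈ range (2 * N), a i * a (i + 1) := by
        rw [sum_add_distrib, ← mul_sum, ← mul_sum, sum_range_succ (fun i => a i * a (i + 1)),
          hlast, mul_zero, add_zero]
    _ ≤ 3 / 4 * (∑ i ∈ range (2 * N + 1), a i) ^ 2 :=
        half_sum_sq_add_two_sum_mul_succ_le (2 * N) fun i => sq_nonneg _
    _ = 3 / 4 * toyM N b ^ 2 := by rw [toyM, sum_Icc_neg_eq_sum_range]

noncomputable def twoMode (j : ℤ) : ℂ :=
  if j = 0 then (1 + I) / 2 else if j = 1 then (1 - I) / 2 else 0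

lemma twoMode_eq_zero {j : ℤ} (h₀ : j ≠ 0) (h₁ : j ≠ 1) : twoMode j = 0 := by
  simp [twoMode, h₀, h₁]

lemma sq_norm_twoMode_zero : ‖twoMode 0‖ ^ 2 = 1 / 2 := by
  rw [Complex.sq_norm]; simp [twoMode, normSq_apply]; norm_num

lemma sq_norm_twoMode_one : ‖twoMode 1‖ ^ 2 = 1 / 2 := by
  rw [Complex.sq_norm]; simp [twoMode, normSq_apply]; norm_num

lemma conj_twoMode_one : starRingEnd ℂ (twoMode 1) = twoMode 0 := by
  simp [twoMode, map_div₀, map_ofNat]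

lemma twoMode_zero_pow_four : twoMode 0 ^ 4 = -1 / 4 := by
  simp only [twoMode, if_true]
  linear_combination (I ^ 2 + 4 * I + 5) / 16 * I_sq

lemma toyM_twoMode {N : ℕ} (hN : 1 ≤ N) : toyM N twoMode = 1 := by
  rw [toyM, sum_Icc_neg_eq_add_of_eq_zero hN fun j h₀ h₁ => by simp [twoMode_eq_zero h₀ h₁],
    sq_norm_twoMode_zero, sq_norm_twoMode_one]
  norm_num

lemma toyH_twoMode {N : ℕ} (hN : 1 ≤ N) : toyH N twoMode = 3 / 4 := by
  rw [toyH, sum_Icc_neg_eq_add_of_eq_zero hN fun j h₀ h₁ => by simp [twoMode_eq_zero h₀ h₁],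
    twoMode_eq_zero (j := 0 - 1) (by norm_num) (by norm_num), sub_self, conj_twoMode_one,
    ← pow_add, twoMode_zero_pow_four]
  simp only [show ∀ z : ℂ, ‖z‖ ^ 4 = (‖z‖ ^ 2) ^ 2 from fun z => by ring, sq_norm_twoMode_zero,
    sq_norm_twoMode_one]
  norm_num

/-- Sharp upper bound: `H(b) ≤ (3/4) M(b)²`, with equality attained at a mass-one
two-mode configuration. -/
theorem toyH_upper_bound (N : ℕ) (hN : 1 ≤ N) :
    (∀ b : ℤ → ℂ, (∀ j : ℤ, j ∉ Finset.Icc (-(N : ℤ)) (N : ℤ) → b j = 0) →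
      toyH N b ≤ (3 / 4) * (toyM N b) ^ 2) ∧
    (∃ b : ℤ → ℂ, (∀ j : ℤ, j ∉ Finset.Icc (-(N : ℤ)) (N : ℤ) → b j = 0) ∧
      toyM N b = 1 ∧ toyH N b = 3 / 4) := by
  refine ⟨fun b hb => toyH_le (hb _ (by simp)), twoMode, fun j hj => ?_, toyM_twoMode hN,
    toyH_twoMode hN⟩
  simp only [mem_Icc, not_and_or, not_le] at hj
  exact twoMode_eq_zero (by omega) (by omega)
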